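/- Let K = ℚ(ζ) be the 7th cyclotomic field with ζ a primitive 7th root of unity, and let f4 = x^3*y + y^3*z + z^3*x in K[x,y,z]. Let i denote the 3×3 matrix over K equal to ((2ζ^4 + 2ζ^2 + 2ζ + 1)/7) times the matrix with rows (ζ - ζ^6, ζ^2 - ζ^5, ζ^4 - ζ^3), (ζ^2 - ζ^5, ζ^4 - ζ^3, ζ - ζ^6), (ζ^4 - ζ^3, ζ - ζ^6, ζ^2 - ζ^5). Then the K-algebra endomorphism of K[x,y,z] sending the column vector of variables (x,y,z) to i·(x,y,z) fixes f4. -/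
import Mathlib


open MvPolynomial

/-- The 7th cyclotomic field `K = ℚ(ζ)`. -/
noncomputable abbrev K7 : Type := CyclotomicField 7 ℚ

/-- The Klein quartic `f4 = x^3*y + y^3*z + z^3*x` in `K[x,y,z]`. -/
noncomputable def f4 : MvPolynomial (Fin 3) K7 :=
  X 0 ^ 3 * X 1 + X 1 ^ 3 * X 2 + X 2 ^ 3 * X 0

/-- The matrix `i`, depending on a primitive 7th root of unity `ζ`. -/
noncomputable def matI (ζ : K7) : Matrix (Fin 3) (Fin 3) K7 :=
  ((2 * ζ ^ 4 + 2 * ζ ^ 2 + 2 * ζ + 1) / 7) •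
    !![ζ - ζ ^ 6, ζ ^ 2 - ζ ^ 5, ζ ^ 4 - ζ ^ 3;
       ζ ^ 2 - ζ ^ 5, ζ ^ 4 - ζ ^ 3, ζ - ζ ^ 6;
       ζ ^ 4 - ζ ^ 3, ζ - ζ ^ 6, ζ ^ 2 - ζ ^ 5]

/-- The linear substitution determined by a `3 × 3` matrix `M`, as a
`K`-algebra endomorphism of `K[x,y,z]`: each variable `x_k` is sent to the
`k`-th entry of `M·(x,y,z)ᵀ`. -/
noncomputable def matSub (M : Matrix (Fin 3) (Fin 3) K7) :
    MvPolynomial (Fin 3) K7 →ₐ[K7] MvPolynomial (Fin 3) K7 :=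
  aeval fun k => ∑ l : Fin 3, C (M k l) * X l

set_option maxHeartbeats 4000000 in
/-- The substitution by the matrix `i` fixes the Klein quartic. -/
theorem stmt8 (ζ : K7) (hζ : IsPrimitiveRoot ζ 7) :
    matSub (matI ζ) f4 = f4 := by
  have h7 : ζ ^ 7 = 1 := hζ.pow_eq_one
  have hΦ : ζ ^ 6 + ζ ^ 5 + ζ ^ 4 + ζ ^ 3 + ζ ^ 2 + ζ + 1 = 0 := by
    have h := hζ.geom_sum_eq_zero (by norm_num)
    simp [Finset.sum_range_succ] at h
    linear_combination h
  apply MvPolynomial.funext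
  intro v
  simp only [matSub, matI, f4, map_add, map_mul, map_pow, aeval_X, eval_add, eval_mul,
    eval_pow, eval_X, eval_C, Fin.sum_univ_three, Matrix.smul_apply, Matrix.of_apply,
    Matrix.cons_val', Matrix.empty_val', Matrix.cons_val_fin_one, Matrix.cons_val_zero,
    Matrix.cons_val_one, Matrix.cons_val_two, Matrix.head_cons, Matrix.head_fin_const,
    Matrix.tail_cons, smul_eq_mul]
  linear_combination ((6/7) * (v 1) ^ 3 * (v 2) + (6/7) * (v 0) * (v 2) ^ 3 + (6/7) * (v 0) ^ 3 * (v 1) + (-1/7) * ζ * (v 1) ^ 3 * (v 2) + (-1/7) * ζ * (v 0) * (v 2) ^ 3 + (-1/7) * ζ * (v 0) ^ 3 * (v 1) + (-1/7) * ζ ^ 2 * (v 1) ^ 3 * (v 2) + (-1/7) * ζ ^ 2 * (v 0) * (v 2) ^ 3 + (-1/7) * ζ ^ 2 * (v 0) ^ 3 * (v 1) + (-1/7) * ζ ^ 3 * (v 1) ^ 3 * (v 2) + (-1/7) * ζ ^ 3 * (v 0) * (v 2) ^ 3 + (-1/7) * ζ ^ 3 * (v 0) ^ 3 * (v 1) +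 (-1/2401) * ζ ^ 4 * (v 1) * (v 2) ^ 3 + (-1/7) * ζ ^ 4 * (v 1) ^ 3 * (v 2) + (-1/7) * ζ ^ 4 * (v 0) * (v 2) ^ 3 + (-1/2401) * ζ ^ 4 * (v 0) * (v 1) ^ 3 + (-1/2401) * ζ ^ 4 * (v 0) ^ 3 * (v 2) + (-1/7) * ζ ^ 4 * (v 0) ^ 3 * (v 1) + (-1/2401) * ζ ^ 5 * (v 2) ^ 4 + (-8/2401) * ζ ^ 5 * (v 1) * (v 2) ^ 3 + (-1/7) * ζ ^ 5 * (v 1) ^ 3 * (v 2) + (-1/2401) * ζ ^ 5 * (v 1) ^ 4 + (-1/7) * ζ ^ 5 * (v 0) * (v 2) ^ 3 + (-3/2401) * ζ ^ 5 * (v 0) * (v 1) * (v 2) ^ 2 + (-3/2401) * ζ ^ 5 * (v 0) * (v 1) ^ 2 * (v 2) + (-8/2401) * ζ ^ 5 * (v 0) * (v 1) ^ 3 + (-3/2401) * ζ ^ 5 * (v 0) ^ 2 * (v 1) * (v 2) + (-8/2401) * ζ ^ 5 * (v 0) ^ 3 * (v 2) + (-1/7) * ζ ^ 5 * (v 0)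 ^ 3 * (v 1) + (-1/2401) * ζ ^ 5 * (v 0) ^ 4 + (-8/2401) * ζ ^ 6 * (v 2) ^ 4 + (-32/2401) * ζ ^ 6 * (v 1) * (v 2) ^ 3 + (3/2401) * ζ ^ 6 * (v 1) ^ 2 * (v 2) ^ 2 + (-345/2401) * ζ ^ 6 * (v 1) ^ 3 * (v 2) + (-8/2401) * ζ ^ 6 * (v 1) ^ 4 + (-345/2401) * ζ ^ 6 * (v 0) * (v 2) ^ 3 + (-27/2401) * ζ ^ 6 * (v 0) * (v 1) * (v 2) ^ 2 + (-27/2401) * ζ ^ 6 * (v 0) * (v 1) ^ 2 * (v 2) + (-32/2401) * ζ ^ 6 * (v 0) * (v 1) ^ 3 + (3/2401) * ζ ^ 6 * (v 0) ^ 2 * (v 2) ^ 2 + (-27/2401) * ζ ^ 6 * (v 0) ^ 2 * (v 1) * (v 2) + (3/2401) * ζ ^ 6 * (v 0) ^ 2 * (v 1) ^ 2 + (-32/2401) * ζ ^ 6 * (v 0) ^ 3 * (v 2) + (-345/2401) * ζ ^ 6 * (v 0) ^ 3 * (v 1) + (-8/2401) * ζ ^ 6 * (v 0) ^ 4 + (-32/2401)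 * ζ ^ 7 * (v 2) ^ 4 + (-11/343) * ζ ^ 7 * (v 1) * (v 2) ^ 3 + (3/343) * ζ ^ 7 * (v 1) ^ 2 * (v 2) ^ 2 + (2040/2401) * ζ ^ 7 * (v 1) ^ 3 * (v 2) + (-32/2401) * ζ ^ 7 * (v 1) ^ 4 + (2040/2401) * ζ ^ 7 * (v 0) * (v 2) ^ 3 + (-114/2401) * ζ ^ 7 * (v 0) * (v 1) * (v 2) ^ 2 + (-114/2401) * ζ ^ 7 * (v 0) * (v 1) ^ 2 * (v 2) + (-11/343) * ζ ^ 7 * (v 0) * (v 1) ^ 3 + (3/343) * ζ ^ 7 * (v 0) ^ 2 * (v 2) ^ 2 + (-114/2401) * ζ ^ 7 * (v 0) ^ 2 * (v 1) * (v 2) + (3/343) * ζ ^ 7 * (v 0) ^ 2 * (v 1) ^ 2 + (-11/343) * ζ ^ 7 * (v 0) ^ 3 * (v 2) + (2040/2401) * ζ ^ 7 * (v 0) ^ 3 * (v 1) + (-32/2401) * ζ ^ 7 * (v 0) ^ 4 + (-79/2401) * ζ ^ 8 * (v 2) ^ 4 + (-121/2401) * ζ ^ 8 * (v 1) * (v 2)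 ^ 3 + (72/2401) * ζ ^ 8 * (v 1) ^ 2 * (v 2) ^ 2 + (-426/2401) * ζ ^ 8 * (v 1) ^ 3 * (v 2) + (-79/2401) * ζ ^ 8 * (v 1) ^ 4 + (-426/2401) * ζ ^ 8 * (v 0) * (v 2) ^ 3 + (-288/2401) * ζ ^ 8 * (v 0) * (v 1) * (v 2) ^ 2 + (-288/2401) * ζ ^ 8 * (v 0) * (v 1) ^ 2 * (v 2) + (-121/2401) * ζ ^ 8 * (v 0) * (v 1) ^ 3 + (72/2401) * ζ ^ 8 * (v 0) ^ 2 * (v 2) ^ 2 + (-288/2401) * ζ ^ 8 * (v 0) ^ 2 * (v 1) * (v 2) + (72/2401) * ζ ^ 8 * (v 0) ^ 2 * (v 1) ^ 2 + (-121/2401) * ζ ^ 8 * (v 0) ^ 3 * (v 2) + (-426/2401) * ζ ^ 8 * (v 0) ^ 3 * (v 1) + (-79/2401) * ζ ^ 8 * (v 0) ^ 4 + (-135/2401) * ζ ^ 9 * (v 2) ^ 4 + (-122/2401) * ζ ^ 9 * (v 1) * (v 2) ^ 3 + (138/2401) * ζ ^ 9 * (v 1) ^ 2 * (v 2) ^ 2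 + (-579/2401) * ζ ^ 9 * (v 1) ^ 3 * (v 2) + (-135/2401) * ζ ^ 9 * (v 1) ^ 4 + (-579/2401) * ζ ^ 9 * (v 0) * (v 2) ^ 3 + (-477/2401) * ζ ^ 9 * (v 0) * (v 1) * (v 2) ^ 2 + (-477/2401) * ζ ^ 9 * (v 0) * (v 1) ^ 2 * (v 2) + (-122/2401) * ζ ^ 9 * (v 0) * (v 1) ^ 3 + (138/2401) * ζ ^ 9 * (v 0) ^ 2 * (v 2) ^ 2 + (-477/2401) * ζ ^ 9 * (v 0) ^ 2 * (v 1) * (v 2) + (138/2401) * ζ ^ 9 * (v 0) ^ 2 * (v 1) ^ 2 + (-122/2401) * ζ ^ 9 * (v 0) ^ 3 * (v 2) + (-579/2401) * ζ ^ 9 * (v 0) ^ 3 * (v 1) + (-135/2401) * ζ ^ 9 * (v 0) ^ 4 + (-165/2401) * ζ ^ 10 * (v 2) ^ 4 + (-11/343) * ζ ^ 10 * (v 1) * (v 2) ^ 3 + (156/2401) * ζ ^ 10 * (v 1) ^ 2 * (v 2) ^ 2 + (-794/2401) * ζ ^ 10 * (v 1) ^ 3 * (v 2) + (-165/2401) *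 ζ ^ 10 * (v 1) ^ 4 + (-794/2401) * ζ ^ 10 * (v 0) * (v 2) ^ 3 + (-543/2401) * ζ ^ 10 * (v 0) * (v 1) * (v 2) ^ 2 + (-543/2401) * ζ ^ 10 * (v 0) * (v 1) ^ 2 * (v 2) + (-11/343) * ζ ^ 10 * (v 0) * (v 1) ^ 3 + (156/2401) * ζ ^ 10 * (v 0) ^ 2 * (v 2) ^ 2 + (-543/2401) * ζ ^ 10 * (v 0) ^ 2 * (v 1) * (v 2) + (156/2401) * ζ ^ 10 * (v 0) ^ 2 * (v 1) ^ 2 + (-11/343) * ζ ^ 10 * (v 0) ^ 3 * (v 2) + (-794/2401) * ζ ^ 10 * (v 0) ^ 3 * (v 1) + (-165/2401) * ζ ^ 10 * (v 0) ^ 4 + (-139/2401) * ζ ^ 11 * (v 2) ^ 4 + (-11/2401) * ζ ^ 11 * (v 1) * (v 2) ^ 3 + (12/343) * ζ ^ 11 * (v 1) ^ 2 * (v 2) ^ 2 + (-131/343) * ζ ^ 11 * (v 1) ^ 3 * (v 2) + (-139/2401) * ζ ^ 11 * (v 1) ^ 4 + (-131/343) * ζ ^ 11 * (v 0) * (v 2)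 ^ 3 + (-417/2401) * ζ ^ 11 * (v 0) * (v 1) * (v 2) ^ 2 + (-417/2401) * ζ ^ 11 * (v 0) * (v 1) ^ 2 * (v 2) + (-11/2401) * ζ ^ 11 * (v 0) * (v 1) ^ 3 + (12/343) * ζ ^ 11 * (v 0) ^ 2 * (v 2) ^ 2 + (-417/2401) * ζ ^ 11 * (v 0) ^ 2 * (v 1) * (v 2) + (12/343) * ζ ^ 11 * (v 0) ^ 2 * (v 1) ^ 2 + (-11/2401) * ζ ^ 11 * (v 0) ^ 3 * (v 2) + (-131/343) * ζ ^ 11 * (v 0) ^ 3 * (v 1) + (-139/2401) * ζ ^ 11 * (v 0) ^ 4 + (-25/2401) * ζ ^ 12 * (v 2) ^ 4 + (66/2401) * ζ ^ 12 * (v 1) * (v 2) ^ 3 + (6/2401) * ζ ^ 12 * (v 1) ^ 2 * (v 2) ^ 2 + (-796/2401) * ζ ^ 12 * (v 1) ^ 3 * (v 2) + (-25/2401) * ζ ^ 12 * (v 1) ^ 4 + (-796/2401) * ζ ^ 12 * (v 0) * (v 2) ^ 3 + (-75/2401) * ζ ^ 12 * (v 0) * (v 1) * (v 2) ^ 2 +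 (-75/2401) * ζ ^ 12 * (v 0) * (v 1) ^ 2 * (v 2) + (66/2401) * ζ ^ 12 * (v 0) * (v 1) ^ 3 + (6/2401) * ζ ^ 12 * (v 0) ^ 2 * (v 2) ^ 2 + (-75/2401) * ζ ^ 12 * (v 0) ^ 2 * (v 1) * (v 2) + (6/2401) * ζ ^ 12 * (v 0) ^ 2 * (v 1) ^ 2 + (66/2401) * ζ ^ 12 * (v 0) ^ 3 * (v 2) + (-796/2401) * ζ ^ 12 * (v 0) ^ 3 * (v 1) + (-25/2401) * ζ ^ 12 * (v 0) ^ 4 + (159/2401) * ζ ^ 13 * (v 2) ^ 4 + (193/2401) * ζ ^ 13 * (v 1) * (v 2) ^ 3 + (-96/2401) * ζ ^ 13 * (v 1) ^ 2 * (v 2) ^ 2 + (-373/2401) * ζ ^ 13 * (v 1) ^ 3 * (v 2) + (159/2401) * ζ ^ 13 * (v 1) ^ 4 + (-373/2401) * ζ ^ 13 * (v 0) * (v 2) ^ 3 + (528/2401) * ζ ^ 13 * (v 0) * (v 1) * (v 2) ^ 2 + (528/2401) * ζ ^ 13 * (v 0) * (v 1) ^ 2 * (v 2) + (193/2401) * ζ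 ^ 13 * (v 0) * (v 1) ^ 3 + (-96/2401) * ζ ^ 13 * (v 0) ^ 2 * (v 2) ^ 2 + (528/2401) * ζ ^ 13 * (v 0) ^ 2 * (v 1) * (v 2) + (-96/2401) * ζ ^ 13 * (v 0) ^ 2 * (v 1) ^ 2 + (193/2401) * ζ ^ 13 * (v 0) ^ 3 * (v 2) + (-373/2401) * ζ ^ 13 * (v 0) ^ 3 * (v 1) + (159/2401) * ζ ^ 13 * (v 0) ^ 4 + (344/2401) * ζ ^ 14 * (v 2) ^ 4 + (277/2401) * ζ ^ 14 * (v 1) * (v 2) ^ 3 + (-261/2401) * ζ ^ 14 * (v 1) ^ 2 * (v 2) ^ 2 + (2690/2401) * ζ ^ 14 * (v 1) ^ 3 * (v 2) + (344/2401) * ζ ^ 14 * (v 1) ^ 4 + (2690/2401) * ζ ^ 14 * (v 0) * (v 2) ^ 3 + (1170/2401) * ζ ^ 14 * (v 0) * (v 1) * (v 2) ^ 2 + (1170/2401) * ζ ^ 14 * (v 0) * (v 1) ^ 2 * (v 2) + (277/2401) * ζ ^ 14 * (v 0) * (v 1) ^ 3 + (-261/2401) * ζ ^ 14 * (v 0)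 ^ 2 * (v 2) ^ 2 + (1170/2401) * ζ ^ 14 * (v 0) ^ 2 * (v 1) * (v 2) + (-261/2401) * ζ ^ 14 * (v 0) ^ 2 * (v 1) ^ 2 + (277/2401) * ζ ^ 14 * (v 0) ^ 3 * (v 2) + (2690/2401) * ζ ^ 14 * (v 0) ^ 3 * (v 1) + (344/2401) * ζ ^ 14 * (v 0) ^ 4 + (416/2401) * ζ ^ 15 * (v 2) ^ 4 + (288/2401) * ζ ^ 15 * (v 1) * (v 2) ^ 3 + (-69/343) * ζ ^ 15 * (v 1) ^ 2 * (v 2) ^ 2 + (1154/2401) * ζ ^ 15 * (v 1) ^ 3 * (v 2) + (416/2401) * ζ ^ 15 * (v 1) ^ 4 + (1154/2401) * ζ ^ 15 * (v 0) * (v 2) ^ 3 + (1443/2401) * ζ ^ 15 * (v 0) * (v 1) * (v 2) ^ 2 + (1443/2401) * ζ ^ 15 * (v 0) * (v 1) ^ 2 * (v 2) + (288/2401) * ζ ^ 15 * (v 0) * (v 1) ^ 3 + (-69/343) * ζ ^ 15 * (v 0) ^ 2 * (v 2) ^ 2 + (1443/2401) * ζ ^ 15 * (v 0) ^ 2 *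 (v 1) * (v 2) + (-69/343) * ζ ^ 15 * (v 0) ^ 2 * (v 1) ^ 2 + (288/2401) * ζ ^ 15 * (v 0) ^ 3 * (v 2) + (1154/2401) * ζ ^ 15 * (v 0) ^ 3 * (v 1) + (416/2401) * ζ ^ 15 * (v 0) ^ 4 + (425/2401) * ζ ^ 16 * (v 2) ^ 4 + (232/2401) * ζ ^ 16 * (v 1) * (v 2) ^ 3 + (-312/2401) * ζ ^ 16 * (v 1) ^ 2 * (v 2) ^ 2 + (32/49) * ζ ^ 16 * (v 1) ^ 3 * (v 2) + (425/2401) * ζ ^ 16 * (v 1) ^ 4 + (32/49) * ζ ^ 16 * (v 0) * (v 2) ^ 3 + (27/49) * ζ ^ 16 * (v 0) * (v 1) * (v 2) ^ 2 + (27/49) * ζ ^ 16 * (v 0) * (v 1) ^ 2 * (v 2) + (232/2401) * ζ ^ 16 * (v 0) * (v 1) ^ 3 + (-312/2401) * ζ ^ 16 * (v 0) ^ 2 * (v 2) ^ 2 + (27/49) * ζ ^ 16 * (v 0) ^ 2 * (v 1) * (v 2) + (-312/2401) * ζ ^ 16 * (v 0) ^ 2 * (v 1) ^ 2 + (232/2401)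 * ζ ^ 16 * (v 0) ^ 3 * (v 2) + (32/49) * ζ ^ 16 * (v 0) ^ 3 * (v 1) + (425/2401) * ζ ^ 16 * (v 0) ^ 4 + (288/2401) * ζ ^ 17 * (v 2) ^ 4 + (225/2401) * ζ ^ 17 * (v 1) * (v 2) ^ 3 + (-192/2401) * ζ ^ 17 * (v 1) ^ 2 * (v 2) ^ 2 + (1144/2401) * ζ ^ 17 * (v 1) ^ 3 * (v 2) + (288/2401) * ζ ^ 17 * (v 1) ^ 4 + (1144/2401) * ζ ^ 17 * (v 0) * (v 2) ^ 3 + (144/343) * ζ ^ 17 * (v 0) * (v 1) * (v 2) ^ 2 + (144/343) * ζ ^ 17 * (v 0) * (v 1) ^ 2 * (v 2) + (225/2401) * ζ ^ 17 * (v 0) * (v 1) ^ 3 + (-192/2401) * ζ ^ 17 * (v 0) ^ 2 * (v 2) ^ 2 + (144/343) * ζ ^ 17 * (v 0) ^ 2 * (v 1) * (v 2) + (-192/2401) * ζ ^ 17 * (v 0) ^ 2 * (v 1) ^ 2 + (225/2401) * ζ ^ 17 * (v 0) ^ 3 * (v 2) + (1144/2401) * ζ ^ 17 * (v 0) ^ 3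 * (v 1) + (288/2401) * ζ ^ 17 * (v 0) ^ 4 + (8/343) * ζ ^ 18 * (v 2) ^ 4 + (32/2401) * ζ ^ 18 * (v 1) * (v 2) ^ 3 + (-16/343) * ζ ^ 18 * (v 1) ^ 3 * (v 2) + (8/343) * ζ ^ 18 * (v 1) ^ 4 + (-16/343) * ζ ^ 18 * (v 0) * (v 2) ^ 3 + (24/343) * ζ ^ 18 * (v 0) * (v 1) * (v 2) ^ 2 + (24/343) * ζ ^ 18 * (v 0) * (v 1) ^ 2 * (v 2) + (32/2401) * ζ ^ 18 * (v 0) * (v 1) ^ 3 + (24/343) * ζ ^ 18 * (v 0) ^ 2 * (v 1) * (v 2) + (32/2401) * ζ ^ 18 * (v 0) ^ 3 * (v 2) + (-16/343) * ζ ^ 18 * (v 0) ^ 3 * (v 1) + (8/343) * ζ ^ 18 * (v 0) ^ 4 + (-248/2401) * ζ ^ 19 * (v 2) ^ 4 + (-120/2401) * ζ ^ 19 * (v 1) * (v 2) ^ 3 + (-96/2401) * ζ ^ 19 * (v 1) ^ 2 * (v 2) ^ 2 + (-872/2401) * ζ ^ 19 * (v 1) ^ 3 * (v 2) + (-248/2401)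 * ζ ^ 19 * (v 1) ^ 4 + (-872/2401) * ζ ^ 19 * (v 0) * (v 2) ^ 3 + (-744/2401) * ζ ^ 19 * (v 0) * (v 1) * (v 2) ^ 2 + (-744/2401) * ζ ^ 19 * (v 0) * (v 1) ^ 2 * (v 2) + (-120/2401) * ζ ^ 19 * (v 0) * (v 1) ^ 3 + (-96/2401) * ζ ^ 19 * (v 0) ^ 2 * (v 2) ^ 2 + (-744/2401) * ζ ^ 19 * (v 0) ^ 2 * (v 1) * (v 2) + (-96/2401) * ζ ^ 19 * (v 0) ^ 2 * (v 1) ^ 2 + (-120/2401) * ζ ^ 19 * (v 0) ^ 3 * (v 2) + (-872/2401) * ζ ^ 19 * (v 0) ^ 3 * (v 1) + (-248/2401) * ζ ^ 19 * (v 0) ^ 4 + (-40/343) * ζ ^ 20 * (v 2) ^ 4 + (-192/2401) * ζ ^ 20 * (v 1) * (v 2) ^ 3 + (624/2401) * ζ ^ 20 * (v 1) ^ 2 * (v 2) ^ 2 + (-2160/2401) * ζ ^ 20 * (v 1) ^ 3 * (v 2) + (-40/343) * ζ ^ 20 * (v 1) ^ 4 + (-2160/2401) * ζ ^ 20 * (v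 0) * (v 2) ^ 3 + (-1080/2401) * ζ ^ 20 * (v 0) * (v 1) * (v 2) ^ 2 + (-1080/2401) * ζ ^ 20 * (v 0) * (v 1) ^ 2 * (v 2) + (-192/2401) * ζ ^ 20 * (v 0) * (v 1) ^ 3 + (624/2401) * ζ ^ 20 * (v 0) ^ 2 * (v 2) ^ 2 + (-1080/2401) * ζ ^ 20 * (v 0) ^ 2 * (v 1) * (v 2) + (624/2401) * ζ ^ 20 * (v 0) ^ 2 * (v 1) ^ 2 + (-192/2401) * ζ ^ 20 * (v 0) ^ 3 * (v 2) + (-2160/2401) * ζ ^ 20 * (v 0) ^ 3 * (v 1) + (-40/343) * ζ ^ 20 * (v 0) ^ 4 + (-424/2401) * ζ ^ 21 * (v 2) ^ 4 + (-232/2401) * ζ ^ 21 * (v 1) * (v 2) ^ 3 + (144/2401) * ζ ^ 21 * (v 1) ^ 2 * (v 2) ^ 2 + (8/2401) * ζ ^ 21 * (v 1) ^ 3 * (v 2) + (-424/2401) * ζ ^ 21 * (v 1) ^ 4 + (8/2401) * ζ ^ 21 * (v 0) * (v 2) ^ 3 + (-1200/2401) * ζ ^ 21 * (v 0) * (v 1)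 * (v 2) ^ 2 + (-1200/2401) * ζ ^ 21 * (v 0) * (v 1) ^ 2 * (v 2) + (-232/2401) * ζ ^ 21 * (v 0) * (v 1) ^ 3 + (144/2401) * ζ ^ 21 * (v 0) ^ 2 * (v 2) ^ 2 + (-1200/2401) * ζ ^ 21 * (v 0) ^ 2 * (v 1) * (v 2) + (144/2401) * ζ ^ 21 * (v 0) ^ 2 * (v 1) ^ 2 + (-232/2401) * ζ ^ 21 * (v 0) ^ 3 * (v 2) + (8/2401) * ζ ^ 21 * (v 0) ^ 3 * (v 1) + (-424/2401) * ζ ^ 21 * (v 0) ^ 4 + (-48/343) * ζ ^ 22 * (v 2) ^ 4 + (-360/2401) * ζ ^ 22 * (v 1) * (v 2) ^ 3 + (456/2401) * ζ ^ 22 * (v 1) ^ 2 * (v 2) ^ 2 + (-2080/2401) * ζ ^ 22 * (v 1) ^ 3 * (v 2) + (-48/343) * ζ ^ 22 * (v 1) ^ 4 + (-2080/2401) * ζ ^ 22 * (v 0) * (v 2) ^ 3 + (-1392/2401) * ζ ^ 22 * (v 0) * (v 1) * (v 2) ^ 2 + (-1392/2401) * ζ ^ 22 * (v 0) * (v 1)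 ^ 2 * (v 2) + (-360/2401) * ζ ^ 22 * (v 0) * (v 1) ^ 3 + (456/2401) * ζ ^ 22 * (v 0) ^ 2 * (v 2) ^ 2 + (-1392/2401) * ζ ^ 22 * (v 0) ^ 2 * (v 1) * (v 2) + (456/2401) * ζ ^ 22 * (v 0) ^ 2 * (v 1) ^ 2 + (-360/2401) * ζ ^ 22 * (v 0) ^ 3 * (v 2) + (-2080/2401) * ζ ^ 22 * (v 0) ^ 3 * (v 1) + (-48/343) * ζ ^ 22 * (v 0) ^ 4 + (-256/2401) * ζ ^ 23 * (v 2) ^ 4 + (-32/343) * ζ ^ 23 * (v 1) * (v 2) ^ 3 + (-24/343) * ζ ^ 23 * (v 1) ^ 2 * (v 2) ^ 2 + (400/2401) * ζ ^ 23 * (v 1) ^ 3 * (v 2) + (-256/2401) * ζ ^ 23 * (v 1) ^ 4 + (400/2401) * ζ ^ 23 * (v 0) * (v 2) ^ 3 + (-648/2401) * ζ ^ 23 * (v 0) * (v 1) * (v 2) ^ 2 + (-648/2401) * ζ ^ 23 * (v 0) * (v 1) ^ 2 * (v 2) + (-32/343) * ζ ^ 23 * (v 0) * (v 1) ^ 3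 + (-24/343) * ζ ^ 23 * (v 0) ^ 2 * (v 2) ^ 2 + (-648/2401) * ζ ^ 23 * (v 0) ^ 2 * (v 1) * (v 2) + (-24/343) * ζ ^ 23 * (v 0) ^ 2 * (v 1) ^ 2 + (-32/343) * ζ ^ 23 * (v 0) ^ 3 * (v 2) + (400/2401) * ζ ^ 23 * (v 0) ^ 3 * (v 1) + (-256/2401) * ζ ^ 23 * (v 0) ^ 4 + (24/2401) * ζ ^ 24 * (v 2) ^ 4 + (-16/2401) * ζ ^ 24 * (v 1) * (v 2) ^ 3 + (96/343) * ζ ^ 24 * (v 1) ^ 2 * (v 2) ^ 2 + (-480/2401) * ζ ^ 24 * (v 1) ^ 3 * (v 2) + (24/2401) * ζ ^ 24 * (v 1) ^ 4 + (-480/2401) * ζ ^ 24 * (v 0) * (v 2) ^ 3 + (-72/2401) * ζ ^ 24 * (v 0) * (v 1) * (v 2) ^ 2 + (-72/2401) * ζ ^ 24 * (v 0) * (v 1) ^ 2 * (v 2) + (-16/2401) * ζ ^ 24 * (v 0) * (v 1) ^ 3 + (96/343) * ζ ^ 24 * (v 0) ^ 2 * (v 2) ^ 2 + (-72/2401) *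 ζ ^ 24 * (v 0) ^ 2 * (v 1) * (v 2) + (96/343) * ζ ^ 24 * (v 0) ^ 2 * (v 1) ^ 2 + (-16/2401) * ζ ^ 24 * (v 0) ^ 3 * (v 2) + (-480/2401) * ζ ^ 24 * (v 0) ^ 3 * (v 1) + (24/2401) * ζ ^ 24 * (v 0) ^ 4 + (-80/2401) * ζ ^ 25 * (v 2) ^ 4 + (-216/2401) * ζ ^ 25 * (v 1) * (v 2) ^ 3 + (-96/343) * ζ ^ 25 * (v 1) ^ 2 * (v 2) ^ 2 + (16/49) * ζ ^ 25 * (v 1) ^ 3 * (v 2) + (-80/2401) * ζ ^ 25 * (v 1) ^ 4 + (16/49) * ζ ^ 25 * (v 0) * (v 2) ^ 3 + (-240/2401) * ζ ^ 25 * (v 0) * (v 1) * (v 2) ^ 2 + (-240/2401) * ζ ^ 25 * (v 0) * (v 1) ^ 2 * (v 2) + (-216/2401) * ζ ^ 25 * (v 0) * (v 1) ^ 3 + (-96/343) * ζ ^ 25 * (v 0) ^ 2 * (v 2) ^ 2 + (-240/2401) * ζ ^ 25 * (v 0) ^ 2 * (v 1) * (v 2) + (-96/343) * ζ ^ 25 *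 (v 0) ^ 2 * (v 1) ^ 2 + (-216/2401) * ζ ^ 25 * (v 0) ^ 3 * (v 2) + (16/49) * ζ ^ 25 * (v 0) ^ 3 * (v 1) + (-80/2401) * ζ ^ 25 * (v 0) ^ 4 + (176/2401) * ζ ^ 26 * (v 2) ^ 4 + (144/2401) * ζ ^ 26 * (v 1) * (v 2) ^ 3 + (384/2401) * ζ ^ 26 * (v 1) ^ 2 * (v 2) ^ 2 + (-96/2401) * ζ ^ 26 * (v 1) ^ 3 * (v 2) + (176/2401) * ζ ^ 26 * (v 1) ^ 4 + (-96/2401) * ζ ^ 26 * (v 0) * (v 2) ^ 3 + (528/2401) * ζ ^ 26 * (v 0) * (v 1) * (v 2) ^ 2 + (528/2401) * ζ ^ 26 * (v 0) * (v 1) ^ 2 * (v 2) + (144/2401) * ζ ^ 26 * (v 0) * (v 1) ^ 3 + (384/2401) * ζ ^ 26 * (v 0) ^ 2 * (v 2) ^ 2 + (528/2401) * ζ ^ 26 * (v 0) ^ 2 * (v 1) * (v 2) + (384/2401) * ζ ^ 26 * (v 0) ^ 2 * (v 1) ^ 2 + (144/2401) * ζ ^ 26 * (v 0) ^ 3 *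 (v 2) + (-96/2401) * ζ ^ 26 * (v 0) ^ 3 * (v 1) + (176/2401) * ζ ^ 26 * (v 0) ^ 4 + (80/2401) * ζ ^ 27 * (v 2) ^ 4 + (80/2401) * ζ ^ 27 * (v 1) * (v 2) ^ 3 + (-384/2401) * ζ ^ 27 * (v 1) ^ 2 * (v 2) ^ 2 + (624/2401) * ζ ^ 27 * (v 1) ^ 3 * (v 2) + (80/2401) * ζ ^ 27 * (v 1) ^ 4 + (624/2401) * ζ ^ 27 * (v 0) * (v 2) ^ 3 + (432/2401) * ζ ^ 27 * (v 0) * (v 1) * (v 2) ^ 2 + (432/2401) * ζ ^ 27 * (v 0) * (v 1) ^ 2 * (v 2) + (80/2401) * ζ ^ 27 * (v 0) * (v 1) ^ 3 + (-384/2401) * ζ ^ 27 * (v 0) ^ 2 * (v 2) ^ 2 + (432/2401) * ζ ^ 27 * (v 0) ^ 2 * (v 1) * (v 2) + (-384/2401) * ζ ^ 27 * (v 0) ^ 2 * (v 1) ^ 2 + (80/2401) * ζ ^ 27 * (v 0) ^ 3 * (v 2) + (624/2401) * ζ ^ 27 * (v 0) ^ 3 * (v 1) + (80/2401) * ζ ^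 27 * (v 0) ^ 4 + (16/343) * ζ ^ 28 * (v 2) ^ 4 + (32/2401) * ζ ^ 28 * (v 1) * (v 2) ^ 3 + (96/2401) * ζ ^ 28 * (v 1) ^ 2 * (v 2) ^ 2 + (64/2401) * ζ ^ 28 * (v 1) ^ 3 * (v 2) + (16/343) * ζ ^ 28 * (v 1) ^ 4 + (64/2401) * ζ ^ 28 * (v 0) * (v 2) ^ 3 + (144/2401) * ζ ^ 28 * (v 0) * (v 1) * (v 2) ^ 2 + (144/2401) * ζ ^ 28 * (v 0) * (v 1) ^ 2 * (v 2) + (32/2401) * ζ ^ 28 * (v 0) * (v 1) ^ 3 + (96/2401) * ζ ^ 28 * (v 0) ^ 2 * (v 2) ^ 2 + (144/2401) * ζ ^ 28 * (v 0) ^ 2 * (v 1) * (v 2) + (96/2401) * ζ ^ 28 * (v 0) ^ 2 * (v 1) ^ 2 + (32/2401) * ζ ^ 28 * (v 0) ^ 3 * (v 2) + (64/2401) * ζ ^ 28 * (v 0) ^ 3 * (v 1) + (16/343) * ζ ^ 28 * (v 0) ^ 4 + (48/2401) * ζ ^ 29 * (v 2) ^ 4 + (144/2401) * ζ ^ 29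 * (v 1) * (v 2) ^ 3 + (-192/2401) * ζ ^ 29 * (v 1) ^ 2 * (v 2) ^ 2 + (176/2401) * ζ ^ 29 * (v 1) ^ 3 * (v 2) + (48/2401) * ζ ^ 29 * (v 1) ^ 4 + (176/2401) * ζ ^ 29 * (v 0) * (v 2) ^ 3 + (384/2401) * ζ ^ 29 * (v 0) * (v 1) * (v 2) ^ 2 + (384/2401) * ζ ^ 29 * (v 0) * (v 1) ^ 2 * (v 2) + (144/2401) * ζ ^ 29 * (v 0) * (v 1) ^ 3 + (-192/2401) * ζ ^ 29 * (v 0) ^ 2 * (v 2) ^ 2 + (384/2401) * ζ ^ 29 * (v 0) ^ 2 * (v 1) * (v 2) + (-192/2401) * ζ ^ 29 * (v 0) ^ 2 * (v 1) ^ 2 + (144/2401) * ζ ^ 29 * (v 0) ^ 3 * (v 2) + (176/2401) * ζ ^ 29 * (v 0) ^ 3 * (v 1) + (48/2401) * ζ ^ 29 * (v 0) ^ 4 + (64/2401) * ζ ^ 30 * (v 2) ^ 4 + (16/2401) * ζ ^ 30 * (v 1) * (v 2) ^ 3 + (48/2401) * ζ ^ 30 * (v 1) ^ 2 * (v 2)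 ^ 2 + (32/2401) * ζ ^ 30 * (v 1) ^ 3 * (v 2) + (64/2401) * ζ ^ 30 * (v 1) ^ 4 + (32/2401) * ζ ^ 30 * (v 0) * (v 2) ^ 3 + (96/2401) * ζ ^ 30 * (v 0) * (v 1) * (v 2) ^ 2 + (96/2401) * ζ ^ 30 * (v 0) * (v 1) ^ 2 * (v 2) + (16/2401) * ζ ^ 30 * (v 0) * (v 1) ^ 3 + (48/2401) * ζ ^ 30 * (v 0) ^ 2 * (v 2) ^ 2 + (96/2401) * ζ ^ 30 * (v 0) ^ 2 * (v 1) * (v 2) + (48/2401) * ζ ^ 30 * (v 0) ^ 2 * (v 1) ^ 2 + (16/2401) * ζ ^ 30 * (v 0) ^ 3 * (v 2) + (32/2401) * ζ ^ 30 * (v 0) ^ 3 * (v 1) + (64/2401) * ζ ^ 30 * (v 0) ^ 4 + (64/2401) * ζ ^ 31 * (v 1) * (v 2) ^ 3 + (-48/2401) * ζ ^ 31 * (v 1) ^ 2 * (v 2) ^ 2 + (32/2401) * ζ ^ 31 * (v 1) ^ 3 * (v 2) + (32/2401) * ζ ^ 31 * (v 0) * (v 2) ^ 3 + (48/2401) *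 ζ ^ 31 * (v 0) * (v 1) * (v 2) ^ 2 + (48/2401) * ζ ^ 31 * (v 0) * (v 1) ^ 2 * (v 2) + (64/2401) * ζ ^ 31 * (v 0) * (v 1) ^ 3 + (-48/2401) * ζ ^ 31 * (v 0) ^ 2 * (v 2) ^ 2 + (48/2401) * ζ ^ 31 * (v 0) ^ 2 * (v 1) * (v 2) + (-48/2401) * ζ ^ 31 * (v 0) ^ 2 * (v 1) ^ 2 + (64/2401) * ζ ^ 31 * (v 0) ^ 3 * (v 2) + (32/2401) * ζ ^ 31 * (v 0) ^ 3 * (v 1) + (16/2401) * ζ ^ 32 * (v 2) ^ 4 + (16/2401) * ζ ^ 32 * (v 1) ^ 4 + (48/2401) * ζ ^ 32 * (v 0) * (v 1) * (v 2) ^ 2 + (48/2401) * ζ ^ 32 * (v 0) * (v 1) ^ 2 * (v 2) + (48/2401) * ζ ^ 32 * (v 0) ^ 2 * (v 1) * (v 2) + (16/2401) * ζ ^ 32 * (v 0) ^ 4 + (16/2401) * ζ ^ 33 * (v 1) * (v 2) ^ 3 + (16/2401) * ζ ^ 33 * (v 0) * (v 1) ^ 3 + (16/2401) * ζ ^ 33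 * (v 0) ^ 3 * (v 2)) * h7 + ((-1/7) * (v 1) ^ 3 * (v 2) + (-1/7) * (v 0) * (v 2) ^ 3 + (-1/7) * (v 0) ^ 3 * (v 1)) * hΦ
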